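/- arXiv:1112.3602 — 2 statements merged into one kernel-verified Lean document; each statement's English description precedes it below -/
import Mathlib

section
/- Let T ⊆ ℝ^n be a closed set of positive Lebesgue measure, let I ⊆ ℤ_+^n be a finite set with 0 ∈ I, let g = (g_i)_{i∈I} be real numbers, and fix ρ ∈ L^1(T, dt) with ρ > 0 a.e. on T. If the functional L(λ) = Σ_{i∈I} g_i λ_i − ∫_T e^{Σ_{i∈I} λ_i t^i} ρ(t) dt on ℝ^N (N = card I) is bounded from above and attains its supremum, then the point λ* ∈ ℝ^N at which the supremum is attained is unique. -/
/-!
A maximizer `λ` of `L` has finite partition function `Z(λ) = ∫_T e^{∑ λ_i t^i} ρ`, since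
`L(λ) ≥ L(0) > -∞`. If `λ₁, λ₂` are two maximizers, then
`L(m) ≤ L(λ₁), L(λ₂)` at the midpoint `m`, and the linear part of `L` turns this into
`Z(λ₁) + Z(λ₂) ≤ 2 Z(m)`, the reverse of the convexity inequality. Since
`e^a + e^b - 2e^{(a+b)/2} = (e^{a/2} - e^{b/2})²` and `ρ > 0`, this forces the exponents
`∑ λ₁ᵢ tⁱ` and `∑ λ₂ᵢ tⁱ` to agree a.e. on `T`. A nonzero polynomial vanishes only on a
Lebesgue-null set (induction on the dimension via Fubini), and `T` has positive measure, so
the coefficients agree.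
-/

open MeasureTheory Real ENNReal

/-- The monomial `t ^ i = t₁^{i₁} ⋯ tₙ^{iₙ}`. -/
noncomputable def monom {n : ℕ} (i : Fin n → ℕ) (t : Fin n → ℝ) : ℝ := ∏ j, t j ^ i j

/-- The concave Lagrangian functional
`L(λ) = ∑_{i∈I} g_i λ_i − ∫_T e^{∑_{i∈I} λ_i t^i} ρ(t) dt`, with values in `ℝ ∪ {−∞}`. -/
noncomputable def Lag {n : ℕ} (T : Set (Fin n → ℝ)) (I : Finset (Fin n → ℕ))
    (g : (Fin n → ℕ) → ℝ) (ρ : (Fin n → ℝ) → ℝ) (lam : {i // i ∈ I} → ℝ) : EReal :=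
  ((∑ i ∈ I.attach, g i.1 * lam i : ℝ) : EReal)
    - ((∫⁻ t in T, ENNReal.ofReal (Real.exp (∑ i ∈ I.attach, lam i * monom i.1 t) * ρ t)) : EReal)

namespace MvPolynomial

theorem volume_zeroSet_eq_zero : ∀ {n : ℕ} {p : MvPolynomial (Fin n) ℝ}, p ≠ 0 →
    volume {x | eval x p = 0} = 0
  | 0, p, hp => by
    convert measure_empty (μ := volume)
    refine Set.eq_empty_iff_forall_notMem.2 fun x hx => hp (funext fun y => ?_)
    simpa [Subsingleton.elim y x] using hx
  | n + 1, p, hp => by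
    set q := finSuccEquiv ℝ n p
    obtain ⟨k, hk⟩ : ∃ k, q.coeff k ≠ 0 := by
      by_contra! h
      exact hp ((map_eq_zero_iff _ (finSuccEquiv ℝ n).injective).1
        (Polynomial.ext fun k => by simp [h k] : q = 0))
    set e := MeasurableEquiv.piFinSuccAbove (fun _ : Fin (n + 1) => ℝ) 0
    have he : MeasurePreserving e.symm (volume.prod volume) volume :=
      (measurePreserving_piFinSuccAbove (fun _ => volume) 0).symm
    have hZ : MeasurableSet {x : Fin (n + 1) → ℝ | eval x p = 0} :=
      (isClosed_eq (continuous_eval p) continuous_const).measurableSet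
    rw [← he.measure_preimage_equiv, Measure.prod_apply_symm (hZ.preimage e.symm.measurable)]
    -- Fixing the last `n` coordinates `y`, the slice is the root set of a nonzero polynomial
    -- as soon as `q.coeff k` does not vanish at `y`, which holds a.e. by induction.
    have hy : ∀ᵐ y : Fin n → ℝ, eval y (q.coeff k) ≠ 0 :=
      ae_iff.2 (by simpa using volume_zeroSet_eq_zero hk)
    refine (lintegral_congr_ae (hy.mono fun y hy => ?_)).trans lintegral_zero
    have hq : Polynomial.map (eval y) q ≠ 0 := fun h0 => hy (by
      simpa using congrArg (Polynomial.coeff · k) h0)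
    refine ((Polynomial.finite_setOfPred_isRoot hq).subset fun a ha => ?_).measure_zero _
    simpa [e, MeasurableEquiv.piFinSuccAbove_symm_apply, Fin.consEquiv, q,
      eval_eq_eval_mv_eval'] using ha

theorem eq_zero_of_ae_restrict_eval_eq_zero {n : ℕ} {p : MvPolynomial (Fin n) ℝ}
    {T : Set (Fin n → ℝ)} (hT : volume T ≠ 0) (h : ∀ᵐ t ∂volume.restrict T, eval t p = 0) :
    p = 0 := by
  by_contra hp
  have hZ : MeasurableSet {x : Fin n → ℝ | eval x p = 0} :=
    (isClosed_eq (continuous_eval p) continuous_const).measurableSet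
  exact hT (measure_mono_null_ae ((ae_restrict_iff hZ).1 h) (volume_zeroSet_eq_zero hp))

end MvPolynomial

section PolyFun

variable {n : ℕ} {I : Finset (Fin n → ℕ)}

noncomputable def polyFun (c : I → ℝ) (t : Fin n → ℝ) : ℝ := c ⬝ᵥ fun i => monom i.1 t

theorem polyFun_eq_sum (c : I → ℝ) (t : Fin n → ℝ) :
    polyFun c t = ∑ i ∈ I.attach, c i * monom i.1 t := by
  rw [polyFun, dotProduct, Finset.univ_eq_attach]

theorem continuous_polyFun (c : I → ℝ) : Continuous (polyFun c) := by
  simp only [funext (polyFun_eq_sum c), monom]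
  fun_prop

theorem polyFun_zero : polyFun (0 : I → ℝ) = 0 := by
  ext t
  simp [polyFun]

theorem polyFun_half_smul_add (c₁ c₂ : I → ℝ) (t : Fin n → ℝ) :
    polyFun ((2⁻¹ : ℝ) • (c₁ + c₂)) t = (polyFun c₁ t + polyFun c₂ t) / 2 := by
  simp only [polyFun, smul_dotProduct, add_dotProduct, smul_eq_mul]
  ring

noncomputable def toMvPolynomial (c : I → ℝ) : MvPolynomial (Fin n) ℝ :=
  ∑ i, MvPolynomial.monomial (Finsupp.equivFunOnFinite.symm i.1) (c i)

theorem eval_toMvPolynomial (c : I → ℝ) (t : Fin n → ℝ) :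
    MvPolynomial.eval t (toMvPolynomial c) = polyFun c t := by
  simp [toMvPolynomial, polyFun_eq_sum, MvPolynomial.eval_monomial, Finsupp.prod_pow, monom,
    Finset.univ_eq_attach]

theorem coeff_toMvPolynomial (c : I → ℝ) (i : I) :
    (toMvPolynomial c).coeff (Finsupp.equivFunOnFinite.symm i.1) = c i := by
  classical
  rw [toMvPolynomial, MvPolynomial.coeff_sum, Finset.sum_eq_single i]
  · simp
  · intro j _ hji
    rw [MvPolynomial.coeff_monomial, if_neg]
    exact fun h => hji (Subtype.ext (Finsupp.equivFunOnFinite.symm.injective h))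
  · simp

theorem polyFun_ae_injective {T : Set (Fin n → ℝ)} (hT : volume T ≠ 0) {c₁ c₂ : I → ℝ}
    (h : polyFun c₁ =ᵐ[volume.restrict T] polyFun c₂) : c₁ = c₂ := by
  have hP : toMvPolynomial c₁ - toMvPolynomial c₂ = 0 :=
    MvPolynomial.eq_zero_of_ae_restrict_eval_eq_zero hT <| h.mono fun t ht => by
      simp [eval_toMvPolynomial, ht]
  funext i
  simpa [coeff_toMvPolynomial] using
    congrArg (MvPolynomial.coeff (Finsupp.equivFunOnFinite.symm i.1)) (sub_eq_zero.1 hP)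

end PolyFun

namespace Real

theorem exp_add_exp_sub_two_mul_exp_half (a b : ℝ) :
    exp a + exp b - 2 * exp ((a + b) / 2) = (exp (a / 2) - exp (b / 2)) ^ 2 := by
  have hsq (x : ℝ) : exp x = exp (x / 2) ^ 2 := by rw [sq, ← exp_add, add_halves]
  rw [hsq a, hsq b, add_div, exp_add]
  ring

theorem two_mul_exp_half_le_exp_add_exp (a b : ℝ) : 2 * exp ((a + b) / 2) ≤ exp a + exp b :=
  sub_nonneg.1 (exp_add_exp_sub_two_mul_exp_half a b ▸ sq_nonneg _)

theorem eq_of_exp_add_exp_le_two_mul_exp_half {a b : ℝ}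
    (h : exp a + exp b ≤ 2 * exp ((a + b) / 2)) : a = b := by
  have hsq : (exp (a / 2) - exp (b / 2)) ^ 2 = 0 :=
    le_antisymm (exp_add_exp_sub_two_mul_exp_half a b ▸ sub_nonpos.2 h) (sq_nonneg _)
  simpa using sub_eq_zero.1 (pow_eq_zero_iff two_ne_zero |>.1 hsq)

end Real

/-- Strict convexity of `f ↦ ∫ e^f ρ dμ` along midpoints, for an a.e. positive weight `ρ`. -/
theorem ae_eq_of_lintegral_exp_add_le {α : Type*} [MeasurableSpace α] {μ : Measure α}
    {ρ f₁ f₂ : α → ℝ} (hρ : ∀ᵐ x ∂μ, 0 < ρ x) (hρm : AEMeasurable ρ μ)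
    (hf₁ : AEMeasurable f₁ μ) (hf₂ : AEMeasurable f₂ μ)
    (hfin : ∫⁻ x, .ofReal (exp (f₁ x) * ρ x) ∂μ + ∫⁻ x, .ofReal (exp (f₂ x) * ρ x) ∂μ ≠ ∞)
    (hle : ∫⁻ x, .ofReal (exp (f₁ x) * ρ x) ∂μ + ∫⁻ x, .ofReal (exp (f₂ x) * ρ x) ∂μ ≤
      2 * ∫⁻ x, .ofReal (exp ((f₁ x + f₂ x) / 2) * ρ x) ∂μ) :
    f₁ =ᵐ[μ] f₂ := by
  set u : α → ℝ≥0∞ := fun x => .ofReal (2 * exp ((f₁ x + f₂ x) / 2) * ρ x)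
  set v : α → ℝ≥0∞ := fun x => .ofReal ((exp (f₁ x) + exp (f₂ x)) * ρ x)
  have hv : ∫⁻ x, v x ∂μ =
      ∫⁻ x, .ofReal (exp (f₁ x) * ρ x) ∂μ + ∫⁻ x, .ofReal (exp (f₂ x) * ρ x) ∂μ := by
    rw [← lintegral_add_left' (by fun_prop)]
    refine lintegral_congr_ae (hρ.mono fun x hx => ?_)
    simp only [v, add_mul, ENNReal.ofReal_add (by positivity : 0 ≤ exp (f₁ x) * ρ x)
      (by positivity : 0 ≤ exp (f₂ x) * ρ x)]
  have hu : ∫⁻ x, u x ∂μ = 2 * ∫⁻ x, .ofReal (exp ((f₁ x + f₂ x) / 2) * ρ x) ∂μ := by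
    rw [← lintegral_const_mul' _ _ ofNat_ne_top]
    simp only [u, mul_assoc, ENNReal.ofReal_mul zero_le_two, ENNReal.ofReal_ofNat]
  have huv : u ≤ᵐ[μ] v := hρ.mono fun x hx =>
    ENNReal.ofReal_le_ofReal (by gcongr; exact two_mul_exp_half_le_exp_add_exp _ _)
  have heq : u =ᵐ[μ] v := ae_eq_of_ae_le_of_lintegral_le huv
    (ne_top_of_le_ne_top (hv ▸ hfin) (lintegral_mono_ae huv)) (by fun_prop) (hv ▸ hu ▸ hle)
  filter_upwards [heq, hρ] with x hx hρx
  refine eq_of_exp_add_exp_le_two_mul_exp_half (le_of_mul_le_mul_right ?_ hρx)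
  exact ((ENNReal.ofReal_eq_ofReal_iff (by positivity) (by positivity)).1 hx).ge

section Lagrangian

variable {n : ℕ} {T : Set (Fin n → ℝ)} {I : Finset (Fin n → ℕ)} {g : (Fin n → ℕ) → ℝ}
  {ρ : (Fin n → ℝ) → ℝ}

noncomputable def partitionFn (T : Set (Fin n → ℝ)) (ρ : (Fin n → ℝ) → ℝ) (lam : I → ℝ) :
    ℝ≥0∞ :=
  ∫⁻ t in T, .ofReal (exp (polyFun lam t) * ρ t)

theorem Lag_eq (lam : I → ℝ) :
    Lag T I g ρ lam = (((fun i : I => g i) ⬝ᵥ lam : ℝ) : EReal) - partitionFn T ρ lam := by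
  simp only [Lag, partitionFn, polyFun_eq_sum, dotProduct, Finset.univ_eq_attach]

theorem Lag_eq_coe_sub {lam : I → ℝ} (h : partitionFn T ρ lam ≠ ∞) :
    Lag T I g ρ lam =
      (((fun i : I => g i) ⬝ᵥ lam - (partitionFn T ρ lam).toReal : ℝ) : EReal) := by
  rw [Lag_eq, EReal.coe_sub, ← EReal.coe_ennreal_toReal h]

theorem partitionFn_ne_top_of_forall_Lag_le (hρ : Integrable ρ (volume.restrict T))
    {lam₀ : I → ℝ} (h : ∀ lam, Lag T I g ρ lam ≤ Lag T I g ρ lam₀) :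
    partitionFn T ρ lam₀ ≠ ∞ := by
  have hZ₀ : partitionFn T ρ (0 : I → ℝ) ≠ ∞ := by
    simpa [partitionFn, polyFun_zero] using hρ.lintegral_lt_top.ne
  intro htop
  have := h 0
  rw [Lag_eq_coe_sub hZ₀, Lag_eq, htop, EReal.coe_ennreal_top, EReal.sub_top] at this
  exact EReal.coe_ne_bot _ (le_bot_iff.1 this)

theorem partitionFn_add_le_of_Lag_le {lam₁ lam₂ : I → ℝ} (hZ₁ : partitionFn T ρ lam₁ ≠ ∞)
    (hZ₂ : partitionFn T ρ lam₂ ≠ ∞)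
    (h₁ : Lag T I g ρ ((2⁻¹ : ℝ) • (lam₁ + lam₂)) ≤ Lag T I g ρ lam₁)
    (h₂ : Lag T I g ρ ((2⁻¹ : ℝ) • (lam₁ + lam₂)) ≤ Lag T I g ρ lam₂) :
    partitionFn T ρ lam₁ + partitionFn T ρ lam₂ ≤
      2 * partitionFn T ρ ((2⁻¹ : ℝ) • (lam₁ + lam₂)) := by
  set m := (2⁻¹ : ℝ) • (lam₁ + lam₂)
  by_cases hZm : partitionFn T ρ m = ∞
  · simp [hZm]
  rw [Lag_eq_coe_sub hZm, Lag_eq_coe_sub hZ₁, EReal.coe_le_coe_iff] at h₁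
  rw [Lag_eq_coe_sub hZm, Lag_eq_coe_sub hZ₂, EReal.coe_le_coe_iff] at h₂
  rw [← ENNReal.toReal_le_toReal (add_ne_top.2 ⟨hZ₁, hZ₂⟩) (mul_ne_top ofNat_ne_top hZm),
    toReal_add hZ₁ hZ₂, toReal_mul, toReal_ofNat]
  have hm : (fun i : I => g i) ⬝ᵥ m =
      2⁻¹ * ((fun i : I => g i) ⬝ᵥ lam₁ + (fun i : I => g i) ⬝ᵥ lam₂) := by
    rw [dotProduct_smul, dotProduct_add, smul_eq_mul]
  linarith

end Lagrangian

theorem stmt_4_general {n : ℕ}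
    (T : Set (Fin n → ℝ)) (hTpos : 0 < volume T)
    (I : Finset (Fin n → ℕ))
    (g : (Fin n → ℕ) → ℝ)
    (ρ : (Fin n → ℝ) → ℝ) (hρint : Integrable ρ (volume.restrict T))
    (hρpos : ∀ᵐ t ∂(volume.restrict T), 0 < ρ t) :
    ∀ lam₁ lam₂ : {i // i ∈ I} → ℝ,
      (∀ lam : {i // i ∈ I} → ℝ, Lag T I g ρ lam ≤ Lag T I g ρ lam₁) →
      (∀ lam : {i // i ∈ I} → ℝ, Lag T I g ρ lam ≤ Lag T I g ρ lam₂) →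
      lam₁ = lam₂ := by
  intro lam₁ lam₂ h₁ h₂
  have hZ₁ := partitionFn_ne_top_of_forall_Lag_le hρint h₁
  have hZ₂ := partitionFn_ne_top_of_forall_Lag_le hρint h₂
  have hmid := partitionFn_add_le_of_Lag_le hZ₁ hZ₂ (h₁ _) (h₂ _)
  simp only [partitionFn, polyFun_half_smul_add] at hmid hZ₁ hZ₂
  exact polyFun_ae_injective hTpos.ne' <|
    ae_eq_of_lintegral_exp_add_le hρpos hρint.aemeasurable
      (continuous_polyFun lam₁).aemeasurable (continuous_polyFun lam₂).aemeasurable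
      (add_ne_top.2 ⟨hZ₁, hZ₂⟩) hmid

/-- If the Lagrangian `L` is bounded from above and attains its supremum,
then the point at which the supremum is attained is unique. -/
theorem stmt_4 {n : ℕ}
    (T : Set (Fin n → ℝ)) (hTclosed : IsClosed T) (hTpos : 0 < volume T)
    (I : Finset (Fin n → ℕ)) (hI0 : (0 : Fin n → ℕ) ∈ I)
    (g : (Fin n → ℕ) → ℝ)
    (ρ : (Fin n → ℝ) → ℝ) (hρint : Integrable ρ (volume.restrict T))
    (hρpos : ∀ᵐ t ∂(volume.restrict T), 0 < ρ t)
    (hbdd : ∃ M : ℝ, ∀ lam : {i // i ∈ I} → ℝ, Lag T I g ρ lam ≤ (M : EReal)) :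
    ∀ lam₁ lam₂ : {i // i ∈ I} → ℝ,
      (∀ lam : {i // i ∈ I} → ℝ, Lag T I g ρ lam ≤ Lag T I g ρ lam₁) →
      (∀ lam : {i // i ∈ I} → ℝ, Lag T I g ρ lam ≤ Lag T I g ρ lam₂) →
      lam₁ = lam₂ :=
  stmt_4_general T hTpos I g ρ hρint hρpos
end

section
/- Let T ⊆ ℝ^n be a closed set of positive Lebesgue measure, let I ⊆ ℤ_+^n be a finite set with 0 ∈ I, let g = (g_i)_{i∈I} be real numbers with g_0 = 1, and fix ρ ∈ L^1(T, dt) with ρ > 0 a.e. on T. Suppose the functional L(λ) = Σ_{i∈I} g_i λ_i − ∫_T e^{Σ_{i∈I} λ_i t^i} ρ(t) dt on ℝ^N (N = card I) is bounded from above and attains its supremum at λ* ∈ ℝ^N. Then for every λ = (λ_i)_{i∈I} ∈ ℝ^N with λ ≠ 0 such that Σ_{i∈I} λ_i t^i ≤ 0 for all t ∈ T, one has the strict inequality Σ_{i∈I} g_i λ_i < 0. -/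
open MeasureTheory Real ENNReal

/-! Maximality of `L` at `λ*` gives `L(λ* + λ) ≤ L(λ*)`, i.e.
`∑ g_i λ_i ≤ ∫_T e^{p*} (e^p - 1) ρ` with `p = ∑ λ_i t^i` and `p* = ∑ λ*_i t^i`; both integrals
are finite because `L(λ*) ≥ L(0) > -∞`. Since `p ≤ 0` on `T`, the right-hand side is `≤ 0`, and it
is `< 0` because `ρ > 0` a.e. on `T` while the zero set of the nonzero polynomial `p` is
Lebesgue-null (by induction on the number of variables and Fubini), so `p < 0` on a subset of `T`
of positive measure. -/

open Filter

theorem MvPolynomial.volume_setOf_eval_eq_zero :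
    ∀ {n : ℕ} {P : MvPolynomial (Fin n) ℝ}, P ≠ 0 → volume {x | eval x P = 0} = 0
  | 0, P, hP => by
    obtain ⟨a, rfl⟩ := C_surjective (Fin 0) P
    have ha : a ≠ 0 := by rintro rfl; exact hP C_0
    simp [ha]
  | n + 1, P, hP => by
    set Q := finSuccEquiv ℝ n P
    have hQ : Q ≠ 0 := (map_ne_zero_iff _ (finSuccEquiv ℝ n).injective).2 hP
    have hZ : MeasurableSet {x : Fin (n + 1) → ℝ | eval x P = 0} :=
      (isClosed_singleton.preimage (continuous_eval P)).measurableSet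
    let e := MeasurableEquiv.piFinSuccAbove (fun _ : Fin (n + 1) => ℝ) 0
    have he : MeasurePreserving e.symm volume volume :=
      (volume_preserving_piFinSuccAbove (fun _ : Fin (n + 1) => ℝ) 0).symm
    have hfibre (y : ℝ) : Prod.mk y ⁻¹' (e.symm ⁻¹' {x | eval x P = 0}) =
        {s | eval s (Q.eval (C y)) = 0} := by
      ext s
      simp [e, Q, eval_polynomial_eval_finSuccEquiv, MeasurableEquiv.piFinSuccAbove,
        Fin.insertNthEquiv, Fin.insertNth_zero']
      rfl
    have hroots : {y : ℝ | Q.eval (C y) = 0}.Finite :=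
      (Polynomial.finite_setOfPred_isRoot hQ).preimage (C_injective _ _).injOn
    rw [← he.measure_preimage hZ.nullMeasurableSet, Measure.volume_eq_prod,
      Measure.measure_prod_null (e.symm.measurable hZ)]
    filter_upwards [measure_eq_zero_iff_ae_notMem.1 (hroots.countable.measure_zero volume)]
      with y hy
    rw [Pi.zero_apply, hfibre]
    exact volume_setOf_eval_eq_zero hy

theorem lintegral_ofReal_exp_add_mul_lt {α : Type*} [MeasurableSpace α] {μ : Measure α}
    {q p ρ : α → ℝ} (hq : AEMeasurable q μ) (hρ : AEMeasurable ρ μ)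
    (hρpos : ∀ᵐ x ∂μ, 0 < ρ x) (hp : ∀ᵐ x ∂μ, p x ≤ 0) (hp0 : ∃ᵐ x ∂μ, p x ≠ 0)
    (hfin : ∫⁻ x, ENNReal.ofReal (exp (q x) * ρ x) ∂μ ≠ ∞) :
    ∫⁻ x, ENNReal.ofReal (exp (q x + p x) * ρ x) ∂μ <
      ∫⁻ x, ENNReal.ofReal (exp (q x) * ρ x) ∂μ := by
  have hle : ∀ᵐ x ∂μ,
      ENNReal.ofReal (exp (q x + p x) * ρ x) ≤ ENNReal.ofReal (exp (q x) * ρ x) := by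
    filter_upwards [hρpos, hp] with x hρx hpx
    gcongr
    linarith
  refine lintegral_strict_mono_of_ae_le_of_frequently_ae_lt
    ((hq.exp.mul hρ).ennreal_ofReal) (ne_top_of_le_ne_top hfin (lintegral_mono_ae hle)) hle ?_
  refine hp0.mp ?_
  filter_upwards [hρpos, hp] with x hρx hpx hpx0
  refine ((ENNReal.ofReal_lt_ofReal_iff (by positivity)).2 ?_).ne
  gcongr
  exact add_lt_of_neg_right _ (lt_of_le_of_ne hpx hpx0)

section Lagrangian

variable {n : ℕ} {T : Set (Fin n → ℝ)} {I : Finset (Fin n → ℕ)} {g : (Fin n → ℕ) → ℝ}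
  {ρ : (Fin n → ℝ) → ℝ}

noncomputable def monomSum (I : Finset (Fin n → ℕ)) (c : {i // i ∈ I} → ℝ) (t : Fin n → ℝ) : ℝ :=
  ∑ i ∈ I.attach, c i * monom i.1 t

noncomputable def monomSumPoly (I : Finset (Fin n → ℕ)) (c : {i // i ∈ I} → ℝ) :
    MvPolynomial (Fin n) ℝ :=
  ∑ i ∈ I.attach, MvPolynomial.monomial (Finsupp.equivFunOnFinite.symm i.1) (c i)

theorem eval_monomSumPoly (c : {i // i ∈ I} → ℝ) (t : Fin n → ℝ) :
    MvPolynomial.eval t (monomSumPoly I c) = monomSum I c t := by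
  simp [monomSumPoly, monomSum, MvPolynomial.eval_monomial, Finsupp.prod_pow, monom]

theorem coeff_monomSumPoly (c : {i // i ∈ I} → ℝ) (i : {i // i ∈ I}) :
    (monomSumPoly I c).coeff (Finsupp.equivFunOnFinite.symm i.1) = c i := by
  rw [monomSumPoly, MvPolynomial.coeff_sum, Finset.sum_eq_single_of_mem i (Finset.mem_attach _ _)]
  · rw [MvPolynomial.coeff_monomial, if_pos rfl]
  · intro j _ hji
    rw [MvPolynomial.coeff_monomial,
      if_neg fun h => hji (Subtype.ext (Finsupp.equivFunOnFinite.symm.injective h))]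

theorem monomSumPoly_ne_zero {c : {i // i ∈ I} → ℝ} (hc : c ≠ 0) : monomSumPoly I c ≠ 0 := by
  obtain ⟨i, hi⟩ := Function.ne_iff.1 hc
  refine fun h => hi ?_
  simpa [h] using (coeff_monomSumPoly c i).symm

theorem volume_setOf_monomSum_eq_zero {c : {i // i ∈ I} → ℝ} (hc : c ≠ 0) :
    volume {t | monomSum I c t = 0} = 0 := by
  simpa only [eval_monomSumPoly] using
    MvPolynomial.volume_setOf_eval_eq_zero (monomSumPoly_ne_zero hc)

theorem continuous_monomSum (c : {i // i ∈ I} → ℝ) : Continuous (monomSum I c) :=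
  continuous_finsetSum _ fun _ _ => continuous_const.mul <|
    continuous_finsetProd _ fun j _ => (continuous_apply j).pow _

theorem monomSum_add (c d : {i // i ∈ I} → ℝ) (t : Fin n → ℝ) :
    monomSum I (c + d) t = monomSum I c t + monomSum I d t := by
  simp only [monomSum, Pi.add_apply, add_mul, Finset.sum_add_distrib]

variable (T I ρ) in
noncomputable def expIntegral (c : {i // i ∈ I} → ℝ) : ℝ≥0∞ :=
  ∫⁻ t in T, ENNReal.ofReal (exp (monomSum I c t) * ρ t)

theorem Lag_eq_coe_sub_s9 {c : {i // i ∈ I} → ℝ} (hc : expIntegral T I ρ c ≠ ∞) :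
    Lag T I g ρ c = ((∑ i ∈ I.attach, g i.1 * c i - (expIntegral T I ρ c).toReal : ℝ) : EReal) := by
  change _ - ((expIntegral T I ρ c : ℝ≥0∞) : EReal) = _
  rw [← EReal.coe_ennreal_toReal hc, EReal.coe_sub]

theorem expIntegral_ne_top_of_Lag_ne_bot {c : {i // i ∈ I} → ℝ} (h : Lag T I g ρ c ≠ ⊥) :
    expIntegral T I ρ c ≠ ∞ := by
  intro htop
  apply h
  change _ - ((expIntegral T I ρ c : ℝ≥0∞) : EReal) = ⊥
  rw [htop, EReal.coe_ennreal_top, EReal.sub_top]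

theorem expIntegral_zero_ne_top (hρ : Integrable ρ (volume.restrict T)) :
    expIntegral T I ρ 0 ≠ ∞ := by
  simpa [expIntegral, monomSum] using hρ.lintegral_lt_top.ne

theorem expIntegral_add_lt (hT : 0 < volume T) (hρ : Integrable ρ (volume.restrict T))
    (hρpos : ∀ᵐ t ∂(volume.restrict T), 0 < ρ t) {c d : {i // i ∈ I} → ℝ} (hc : c ≠ 0)
    (hcT : ∀ t ∈ T, monomSum I c t ≤ 0) (hd : expIntegral T I ρ d ≠ ∞) :
    expIntegral T I ρ (d + c) < expIntegral T I ρ d := by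
  have hc_le : ∀ᵐ t ∂(volume.restrict T), monomSum I c t ≤ 0 := by
    rw [ae_iff, Measure.restrict_apply (t := {t | ¬monomSum I c t ≤ 0})
      (measurableSet_le (continuous_monomSum c).measurable measurable_const).compl]
    exact measure_mono_null (fun t ⟨htc, htT⟩ => htc (hcT t htT)) measure_empty
  have hc_ne : ∃ᵐ t ∂(volume.restrict T), monomSum I c t ≠ 0 := by
    have : NeBot (ae (volume.restrict T)) := ae_neBot.2 (Measure.restrict_eq_zero.not.2 hT.ne')
    exact (ae_restrict_of_ae (measure_eq_zero_iff_ae_notMem.1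
      (volume_setOf_monomSum_eq_zero hc))).frequently
  simp only [expIntegral, monomSum_add]
  exact lintegral_ofReal_exp_add_mul_lt (continuous_monomSum d).aemeasurable hρ.aemeasurable
    hρpos hc_le hc_ne hd

end Lagrangian

theorem stmt_9_general {n : ℕ}
    (T : Set (Fin n → ℝ)) (hTpos : 0 < volume T)
    (I : Finset (Fin n → ℕ))
    (g : (Fin n → ℕ) → ℝ)
    (ρ : (Fin n → ℝ) → ℝ) (hρint : Integrable ρ (volume.restrict T))
    (hρpos : ∀ᵐ t ∂(volume.restrict T), 0 < ρ t)
    (lamstar : {i // i ∈ I} → ℝ)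
    (hmax : ∀ lam : {i // i ∈ I} → ℝ, Lag T I g ρ lam ≤ Lag T I g ρ lamstar) :
    ∀ lam : {i // i ∈ I} → ℝ, lam ≠ 0 →
      (∀ t ∈ T, ∑ i ∈ I.attach, lam i * monom i.1 t ≤ 0) →
      ∑ i ∈ I.attach, g i.1 * lam i < 0 := by
  intro lam hlam hnp
  have hLag0 : Lag T I g ρ 0 ≠ ⊥ := by
    rw [Lag_eq_coe_sub_s9 (expIntegral_zero_ne_top hρint)]
    exact EReal.coe_ne_bot _
  have hfin : expIntegral T I ρ lamstar ≠ ∞ :=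
    expIntegral_ne_top_of_Lag_ne_bot (ne_bot_of_le_ne_bot hLag0 (hmax 0))
  have hlt := expIntegral_add_lt hTpos hρint hρpos hlam hnp hfin
  have hle := hmax (lamstar + lam)
  rw [Lag_eq_coe_sub_s9 hfin, Lag_eq_coe_sub_s9 (ne_top_of_lt hlt), EReal.coe_le_coe_iff] at hle
  simp only [Pi.add_apply, mul_add, Finset.sum_add_distrib] at hle
  linarith [ENNReal.toReal_strict_mono hfin hlt]

/-- If the Lagrangian `L` is bounded above and attains its supremum at `λ*`, then the Riesz
functional of `g` is strictly negative on every nonzero polynomial `∑_{i∈I} λ_i X^i` that is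
nonpositive on `T`. -/
theorem stmt_9 {n : ℕ}
    (T : Set (Fin n → ℝ)) (hTclosed : IsClosed T) (hTpos : 0 < volume T)
    (I : Finset (Fin n → ℕ)) (hI0 : (0 : Fin n → ℕ) ∈ I)
    (g : (Fin n → ℕ) → ℝ) (hg0 : g 0 = 1)
    (ρ : (Fin n → ℝ) → ℝ) (hρint : Integrable ρ (volume.restrict T))
    (hρpos : ∀ᵐ t ∂(volume.restrict T), 0 < ρ t)
    (hbdd : ∃ M : ℝ, ∀ lam : {i // i ∈ I} → ℝ, Lag T I g ρ lam ≤ (M : EReal))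
    (lamstar : {i // i ∈ I} → ℝ)
    (hmax : ∀ lam : {i // i ∈ I} → ℝ, Lag T I g ρ lam ≤ Lag T I g ρ lamstar) :
    ∀ lam : {i // i ∈ I} → ℝ, lam ≠ 0 →
      (∀ t ∈ T, ∑ i ∈ I.attach, lam i * monom i.1 t ≤ 0) →
      ∑ i ∈ I.attach, g i.1 * lam i < 0 :=
  stmt_9_general T hTpos I g ρ hρint hρpos lamstar hmax
end
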